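/- arXiv:cond-mat/0312363 — 2 statements merged into one kernel-verified Lean document; each statement's English description precedes it below -/
import Mathlib

section
/- In the sand-Potts random cluster measure φ_p^4 with boundary value 4, the conditional probability that any edge e is open, given the configuration on all other edges, is at least p/(7-6p). -/
open scoped Classical

/-- Lattice sites of `ℤ²`. -/
abbrev Site := ℤ × ℤ

/-- Nearest-neighbor adjacency on `ℤ²`. -/
def adjacent (x y : Site) : Prop :=
  (x.1 - y.1).natAbs + (x.2 - y.2).natAbs = 1

instance (x y : Site) : Decidable (adjacent x y) :=
  inferInstanceAs (Decidable (_ = 1))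

/-- The four nearest neighbors of a site. -/
def nbhd (x : Site) : Finset Site :=
  {(x.1 + 1, x.2), (x.1 - 1, x.2), (x.1, x.2 + 1), (x.1, x.2 - 1)}

/-- Number of neighbors of `x` inside `A`. -/
def nbrs (A : Finset Site) (x : Site) : ℕ :=
  (A.filter fun y => adjacent x y).card

/-- One step of the burning algorithm: remove every site whose height
exceeds its number of remaining neighbors. -/
def burnStep (η : Site → ℕ) (A : Finset Site) : Finset Site :=
  A.filter fun x => η x ≤ nbrs A x

/-- A configuration is burnable (recurrent) on `V` iff iterating the burning
step starting from `V` eventually removes all sites. -/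
def Burnable (V : Finset Site) (η : Site → ℕ) : Prop :=
  ∃ k, (burnStep η)^[k] V = ∅

/-- The square `[-n,n]² ∩ ℤ²`. -/
noncomputable def box (n : ℕ) : Finset Site :=
  Finset.Icc (-(n : ℤ)) n ×ˢ Finset.Icc (-(n : ℤ)) n

/-- Exterior nearest-neighbor boundary of `V`. -/
def extBoundary (V : Finset Site) : Finset Site :=
  (V.biUnion nbhd) \ V

/-- `V ∪ ∂V`. -/
def closureV (V : Finset Site) : Finset Site := V ∪ extBoundary V

/-- `x` and `y` are connected by a nearest-neighbor path inside `S`. -/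
def ConnIn (S : Set Site) (x y : Site) : Prop :=
  Relation.ReflTransGen (fun u v => adjacent u v ∧ u ∈ S ∧ v ∈ S) x y

/-- A finite subset of `ℤ²` is simply connected: it is connected and its
complement is connected. -/
def SimplyConnected (V : Finset Site) : Prop :=
  (∀ x ∈ V, ∀ y ∈ V, ConnIn (↑V) x y) ∧
  (∀ x y : Site, x ∉ V → y ∉ V → ConnIn {z | z ∉ V} x y)

/-- Height configurations on `box n`: value `v : Fin 4` encodes height `v+1`. -/
abbrev Cfg (n : ℕ) := {x : Site // x ∈ box n} → Fin 4

/-- Extension of a configuration on `box n` to all of `ℤ²`, with boundary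
height `a` outside the box. -/
noncomputable def extCfg (n : ℕ) (a : ℕ) (η : Cfg n) : Site → ℕ :=
  fun x => if h : x ∈ box n then (η ⟨x, h⟩ : ℕ) + 1 else a

/-- Number of configurations on `box n` satisfying `P` (counting measure). -/
noncomputable def cnt (n : ℕ) (P : Cfg n → Prop) : ℕ :=
  (Finset.univ.filter P).card

/-- Canonically oriented nearest-neighbor edge (pointing right or up). -/
def canonEdge (e : Site × Site) : Prop :=
  e.2 = (e.1.1 + 1, e.1.2) ∨ e.2 = (e.1.1, e.1.2 + 1)

instance (e : Site × Site) : Decidable (canonEdge e) :=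
  inferInstanceAs (Decidable (_ ∨ _))

/-- The edge set `B`: nearest-neighbor bonds with at least one endpoint in
`box n` (endpoints in `box n ∪ ∂(box n)`). -/
noncomputable def bonds (n : ℕ) : Finset (Site × Site) :=
  ((closureV (box n)) ×ˢ (closureV (box n))).filter
    fun e => canonEdge e ∧ (e.1 ∈ box n ∨ e.2 ∈ box n)

/-- Bond configurations on the edge set `B`. -/
abbrev BondCfg (n : ℕ) := {e : Site × Site // e ∈ bonds n} → Bool

/-- One step of connectivity: an open bond, or the wiring of the boundary
(all boundary sites belong to one cluster). -/
def wiredAdj (n : ℕ) (σ : BondCfg n) (x y : Site) : Prop :=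
  (∃ h : (x, y) ∈ bonds n, σ ⟨(x, y), h⟩ = true) ∨
  (∃ h : (y, x) ∈ bonds n, σ ⟨(y, x), h⟩ = true) ∨
  (x ∈ extBoundary (box n) ∧ y ∈ extBoundary (box n))

/-- `x` and `y` lie in the same cluster of `σ` (boundary wired). -/
def wiredConn (n : ℕ) (σ : BondCfg n) (x y : Site) : Prop :=
  Relation.ReflTransGen (wiredAdj n σ) x y

/-- `η` (with boundary height `a`) is constant on the clusters of `σ`. -/
def ConstOnClusters (n : ℕ) (a : ℕ) (σ : BondCfg n) (η : Cfg n) : Prop :=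
  ∀ x y, wiredConn n σ x y → extCfg n a η x = extCfg n a η y

/-- `k(n,a;σ)`: the number of recurrent configurations constant on the
clusters of `σ` and equal to `a` on the cluster of the boundary. -/
noncomputable def kcount (n : ℕ) (a : ℕ) (σ : BondCfg n) : ℕ :=
  (Finset.univ.filter fun η : Cfg n =>
    Burnable (box n) (extCfg n a η) ∧ ConstOnClusters n a σ η).card

/-- Bernoulli edge weight `∏ₑ p^{σ(e)} (1-p)^{1-σ(e)}`. -/
noncomputable def bweight (n : ℕ) (p : ℝ) (σ : BondCfg n) : ℝ :=
  ∏ e : {e : Site × Site // e ∈ bonds n}, (if σ e then p else 1 - p)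

/-- Unnormalized weight of the sand-Potts random cluster measure `φ_p^a`. -/
noncomputable def rcWeight (n a : ℕ) (p : ℝ) (σ : BondCfg n) : ℝ :=
  bweight n p σ * kcount n a σ

/-!
Writing `k₀, k₁` for `k(n,4;σ)` with `e` closed resp. open, the conditional probability is
`p k₁ / (p k₁ + (1 - p) k₀)`, so it suffices to show `k₀ ≤ 7 k₁` (note `k₁ ≥ 1`: the all-4
configuration is recurrent). Given a recurrent `η` constant on the clusters with `e` closed, raise
the heights on the clusters of both endpoints of `e` to the larger of the two heights there. Heights
only increase, so the result is still recurrent (burning is monotone), and it is constant on the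
clusters with `e` open. The image together with the pair of heights at the endpoints of `e`
determines `η`, and that pair has a prescribed maximum `M ≤ 4`, hence at most `2M - 1 ≤ 7` values.
-/

lemma burnStep_subset_burnStep {η η' : Site → ℕ} (hη : ∀ x, η x ≤ η' x) {A B : Finset Site}
    (hAB : A ⊆ B) : burnStep η' A ⊆ burnStep η B := by
  intro x hx
  simp only [burnStep, Finset.mem_filter] at hx ⊢
  have hnbrs : nbrs A x ≤ nbrs B x := Finset.card_le_card (Finset.filter_subset_filter _ hAB)
  exact ⟨hAB hx.1, (hη x).trans (hx.2.trans hnbrs)⟩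

lemma Burnable.mono {V : Finset Site} {η η' : Site → ℕ} (h : Burnable V η)
    (hη : ∀ x, η x ≤ η' x) : Burnable V η' := by
  obtain ⟨k, hk⟩ := h
  have hsub : ∀ m, (burnStep η')^[m] V ⊆ (burnStep η)^[m] V := by
    intro m
    induction m with
    | zero => exact subset_rfl
    | succ m ih =>
      simp only [Function.iterate_succ_apply']
      exact burnStep_subset_burnStep hη ih
  exact ⟨k, Finset.subset_empty.mp (hk ▸ hsub k)⟩

/-- A site of `A` maximising `x.1 + x.2` has at most two neighbours in `A`, so it burns. -/
lemma burnStep_const_four_ssubset {A : Finset Site} (hA : A.Nonempty) :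
    burnStep (fun _ => 4) A ⊂ A := by
  obtain ⟨x, hx, hmax⟩ := A.exists_max_image (fun z => z.1 + z.2) hA
  refine (Finset.ssubset_iff_of_subset (Finset.filter_subset _ _)).mpr ⟨x, hx, ?_⟩
  have hsub : A.filter (fun y => adjacent x y) ⊆ {(x.1 - 1, x.2), (x.1, x.2 - 1)} := by
    intro y hy
    rw [Finset.mem_filter] at hy
    have hy_le := hmax y hy.1
    have hxy := hy.2
    unfold adjacent at hxy
    simp only [Finset.mem_insert, Finset.mem_singleton, Prod.ext_iff]
    omega
  have hcard := (Finset.card_le_card hsub).trans Finset.card_le_two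
  intro hburnt
  have hfour : 4 ≤ nbrs A x := (Finset.mem_filter.mp hburnt).2
  unfold nbrs at hfour
  omega

lemma burnable_const_four (A : Finset Site) : Burnable A (fun _ => 4) := by
  induction A using Finset.strongInduction with
  | _ A ih =>
    rcases A.eq_empty_or_nonempty with rfl | hA
    · exact ⟨0, rfl⟩
    · obtain ⟨k, hk⟩ := ih _ (burnStep_const_four_ssubset hA)
      exact ⟨k + 1, by rwa [Function.iterate_succ_apply]⟩

instance (n : ℕ) (σ : BondCfg n) : Std.Symm (wiredAdj n σ) where
  symm _ _ h := by
    rcases h with h | h | ⟨hx, hy⟩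
    exacts [Or.inr (Or.inl h), Or.inl h, Or.inr (Or.inr ⟨hy, hx⟩)]

lemma wiredConn.symm {n : ℕ} {σ : BondCfg n} {x y : Site} (h : wiredConn n σ x y) :
    wiredConn n σ y x :=
  Std.Symm.symm (r := Relation.ReflTransGen (wiredAdj n σ)) x y h

noncomputable def heightIdx {n : ℕ} (η : Cfg n) (x : Site) : Fin 4 :=
  if h : x ∈ box n then η ⟨x, h⟩ else 3

lemma extCfg_four_eq {n : ℕ} (η : Cfg n) (x : Site) :
    extCfg n 4 η x = heightIdx η x + 1 := by
  unfold extCfg heightIdx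
  split <;> rfl

lemma heightIdx_of_mem {n : ℕ} (η : Cfg n) (x : {x : Site // x ∈ box n}) :
    heightIdx η x = η x := dif_pos x.2

lemma constOnClusters_four_iff {n : ℕ} {σ : BondCfg n} {η : Cfg n} :
    ConstOnClusters n 4 σ η ↔ ∀ x y, wiredConn n σ x y → heightIdx η x = heightIdx η y := by
  simp only [ConstOnClusters, extCfg_four_eq, add_left_inj, Fin.val_inj]

lemma kcount_four_pos (n : ℕ) (σ : BondCfg n) : 0 < kcount n 4 σ := by
  have hconst : extCfg n 4 (fun _ => 3) = fun _ => 4 := by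
    funext x
    rw [extCfg_four_eq, heightIdx]
    split <;> rfl
  refine Finset.card_pos.mpr ⟨fun _ => 3, Finset.mem_filter.mpr ⟨Finset.mem_univ _, ?_, ?_⟩⟩
  · rw [hconst]
    exact burnable_const_four _
  · intro x y _
    rw [hconst]

lemma card_filter_max_eq_le_seven (M : Fin 4) :
    (Finset.univ.filter fun ab : Fin 4 × Fin 4 => max ab.1 ab.2 = M).card ≤ 7 := by
  revert M
  decide

section MergeRaise

variable {n : ℕ} (σ : BondCfg n) (e : {e : Site × Site // e ∈ bonds n})

def EdgeCluster (x : Site) : Prop :=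
  wiredConn n (Function.update σ e false) x e.1.1 ∨
    wiredConn n (Function.update σ e false) x e.1.2

noncomputable def edgeTop (η : Cfg n) : Fin 4 :=
  max (heightIdx η e.1.1) (heightIdx η e.1.2)

noncomputable def mergeRaise (η : Cfg n) : Cfg n :=
  fun x => if EdgeCluster σ e x then edgeTop e η else η x

variable {σ e}

lemma edgeCluster_fst : EdgeCluster σ e e.1.1 := Or.inl .refl

lemma edgeCluster_snd : EdgeCluster σ e e.1.2 := Or.inr .refl

lemma edgeCluster_iff_of_wiredConn {x y : Site}
    (h : wiredConn n (Function.update σ e false) x y) :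
    EdgeCluster σ e x ↔ EdgeCluster σ e y := by
  unfold EdgeCluster
  constructor
  · rintro (hx | hx)
    exacts [Or.inl (h.symm.trans hx), Or.inr (h.symm.trans hx)]
  · rintro (hy | hy)
    exacts [Or.inl (h.trans hy), Or.inr (h.trans hy)]

lemma wiredAdj_update_true {x y : Site} (h : wiredAdj n (Function.update σ e true) x y) :
    wiredAdj n (Function.update σ e false) x y ∨ (EdgeCluster σ e x ∧ EdgeCluster σ e y) := by
  have hopen : ∀ (b : {e : Site × Site // e ∈ bonds n}), Function.update σ e true b = true →
      Function.update σ e false b = true ∨ b = e := by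
    intro b hb
    by_cases hbe : b = e
    · exact Or.inr hbe
    · rw [Function.update_of_ne hbe] at hb ⊢
      exact Or.inl hb
  rcases h with ⟨hxy, hb⟩ | ⟨hyx, hb⟩ | hbd
  · rcases hopen _ hb with hb | rfl
    exacts [Or.inl (Or.inl ⟨hxy, hb⟩), Or.inr ⟨edgeCluster_fst, edgeCluster_snd⟩]
  · rcases hopen _ hb with hb | rfl
    exacts [Or.inl (Or.inr (Or.inl ⟨hyx, hb⟩)), Or.inr ⟨edgeCluster_snd, edgeCluster_fst⟩]
  · exact Or.inl (Or.inr (Or.inr hbd))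

lemma heightIdx_le_edgeTop {η : Cfg n} (hη : ConstOnClusters n 4 (Function.update σ e false) η)
    {x : Site} (hx : EdgeCluster σ e x) : heightIdx η x ≤ edgeTop e η := by
  rcases hx with hx | hx
  · exact (constOnClusters_four_iff.mp hη _ _ hx).trans_le (le_max_left _ _)
  · exact (constOnClusters_four_iff.mp hη _ _ hx).trans_le (le_max_right _ _)

/-- Outside the box the height is the boundary value, which is already maximal. -/
lemma heightIdx_mergeRaise {η : Cfg n} (hη : ConstOnClusters n 4 (Function.update σ e false) η)
    (x : Site) :
    heightIdx (mergeRaise σ e η) x = if EdgeCluster σ e x then edgeTop e η else heightIdx η x := by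
  by_cases hbox : x ∈ box n
  · simp only [heightIdx, dif_pos hbox, mergeRaise]
  · have hout : ∀ ζ : Cfg n, heightIdx ζ x = 3 := fun ζ => dif_neg hbox
    split_ifs with hx
    · rw [hout]
      exact le_antisymm ((hout η).symm.trans_le (heightIdx_le_edgeTop hη hx)) (Fin.le_last _)
    · rw [hout, hout]

lemma heightIdx_le_mergeRaise {η : Cfg n}
    (hη : ConstOnClusters n 4 (Function.update σ e false) η) (x : Site) :
    heightIdx η x ≤ heightIdx (mergeRaise σ e η) x := by
  rw [heightIdx_mergeRaise hη]
  split_ifs with hx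
  exacts [heightIdx_le_edgeTop hη hx, le_rfl]

lemma heightIdx_mergeRaise_eq_of_wiredAdj {η : Cfg n}
    (hη : ConstOnClusters n 4 (Function.update σ e false) η) {x y : Site}
    (h : wiredAdj n (Function.update σ e true) x y) :
    heightIdx (mergeRaise σ e η) x = heightIdx (mergeRaise σ e η) y := by
  simp only [heightIdx_mergeRaise hη]
  rcases wiredAdj_update_true h with hadj | ⟨hx, hy⟩
  · have hxy : wiredConn n (Function.update σ e false) x y := .single hadj
    by_cases hx : EdgeCluster σ e x
    · rw [if_pos hx, if_pos ((edgeCluster_iff_of_wiredConn hxy).mp hx)]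
    · rw [if_neg hx, if_neg (mt (edgeCluster_iff_of_wiredConn hxy).mpr hx)]
      exact constOnClusters_four_iff.mp hη x y hxy
  · rw [if_pos hx, if_pos hy]

lemma constOnClusters_mergeRaise {η : Cfg n}
    (hη : ConstOnClusters n 4 (Function.update σ e false) η) :
    ConstOnClusters n 4 (Function.update σ e true) (mergeRaise σ e η) := by
  refine constOnClusters_four_iff.mpr fun x y h => ?_
  induction h with
  | refl => rfl
  | tail _ hadj ih => exact ih.trans (heightIdx_mergeRaise_eq_of_wiredAdj hη hadj)

lemma eq_of_mergeRaise_eq {η η' : Cfg n}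
    (hη : ConstOnClusters n 4 (Function.update σ e false) η)
    (hη' : ConstOnClusters n 4 (Function.update σ e false) η')
    (hmerge : mergeRaise σ e η = mergeRaise σ e η')
    (hfst : heightIdx η e.1.1 = heightIdx η' e.1.1)
    (hsnd : heightIdx η e.1.2 = heightIdx η' e.1.2) : η = η' := by
  funext x
  rw [← heightIdx_of_mem η x, ← heightIdx_of_mem η' x]
  by_cases hx : EdgeCluster σ e x
  · rcases hx with hx | hx
    · rw [constOnClusters_four_iff.mp hη _ _ hx, constOnClusters_four_iff.mp hη' _ _ hx, hfst]
    · rw [constOnClusters_four_iff.mp hη _ _ hx, constOnClusters_four_iff.mp hη' _ _ hx, hsnd]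
  · have hx' := congrFun hmerge x
    simp only [mergeRaise, if_neg hx] at hx'
    rw [heightIdx_of_mem, heightIdx_of_mem, hx']

end MergeRaise

lemma card_filter_mergeRaise_eq_le_seven {n : ℕ} {σ : BondCfg n}
    {e : {e : Site × Site // e ∈ bonds n}} {s : Finset (Cfg n)}
    (hs : ∀ η ∈ s, ConstOnClusters n 4 (Function.update σ e false) η) (ζ : Cfg n) :
    (s.filter fun η => mergeRaise σ e η = ζ).card ≤ 7 := by
  refine (Finset.card_le_card_of_injOn (fun η => (heightIdx η e.1.1, heightIdx η e.1.2))
    ?_ ?_).trans (card_filter_max_eq_le_seven (heightIdx ζ e.1.1))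
  · intro η hη
    obtain ⟨hηs, rfl⟩ := Finset.mem_filter.mp hη
    rw [Finset.mem_coe, Finset.mem_filter, heightIdx_mergeRaise (hs η hηs),
      if_pos edgeCluster_fst]
    exact ⟨Finset.mem_univ _, rfl⟩
  · intro η hη η' hη' hpair
    obtain ⟨hηs, hηζ⟩ := Finset.mem_filter.mp hη
    obtain ⟨hη's, hη'ζ⟩ := Finset.mem_filter.mp hη'
    obtain ⟨hfst, hsnd⟩ := Prod.mk.inj hpair
    exact eq_of_mergeRaise_eq (hs η hηs) (hs η' hη's) (hηζ.trans hη'ζ.symm) hfst hsnd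

theorem kcount_update_false_le_seven_mul {n : ℕ} (σ : BondCfg n)
    (e : {e : Site × Site // e ∈ bonds n}) :
    kcount n 4 (Function.update σ e false) ≤ 7 * kcount n 4 (Function.update σ e true) := by
  refine Finset.card_le_mul_card_image_of_maps_to (f := mergeRaise σ e) ?_ 7
    fun ζ _ => card_filter_mergeRaise_eq_le_seven (fun η hη => (Finset.mem_filter.mp hη).2.2) ζ
  intro η hη
  obtain ⟨-, hburn, hconst⟩ := Finset.mem_filter.mp hη
  refine Finset.mem_filter.mpr ⟨Finset.mem_univ _, hburn.mono fun x => ?_,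
    constOnClusters_mergeRaise hconst⟩
  rw [extCfg_four_eq, extCfg_four_eq]
  exact Nat.add_le_add_right (heightIdx_le_mergeRaise hconst x) 1

lemma bweight_update {n : ℕ} (p : ℝ) (σ : BondCfg n) (e : {e : Site × Site // e ∈ bonds n})
    (b : Bool) : bweight n p (Function.update σ e b) =
      (if b then p else 1 - p) * ∏ e' ∈ Finset.univ.erase e, (if σ e' then p else 1 - p) := by
  rw [bweight, ← Finset.mul_prod_erase Finset.univ _ (Finset.mem_univ e), Function.update_self]
  congr 1
  refine Finset.prod_congr rfl fun e' he' => ?_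
  rw [Function.update_of_ne (Finset.ne_of_mem_erase he')]

lemma div_add_le_div_add_of_le_mul {p a b c : ℝ} (hp : 0 < p) (hp1 : p ≤ 1) (ha : 0 < a)
    (hb : 0 ≤ b) (hba : b ≤ c * a) :
    p / (p + (1 - p) * c) ≤ p * a / (p * a + (1 - p) * b) := by
  have hc : 0 ≤ c := nonneg_of_mul_nonneg_left (hb.trans hba) ha
  rw [div_le_div_iff₀ (by nlinarith) (by nlinarith)]
  nlinarith [mul_nonneg (mul_nonneg hp.le (sub_nonneg.mpr hp1)) (sub_nonneg.mpr hba)]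

/-- In `φ_p^4`, the conditional probability that any edge is open given all
other edges is at least `p / (7 - 6p)`. -/
theorem conditional_edge_probability_lower_bound (n : ℕ)
    (p : ℝ) (hp : 0 < p) (hp1 : p < 1)
    (σ : BondCfg n) (e : {e : Site × Site // e ∈ bonds n}) :
    p / (7 - 6 * p) ≤
      rcWeight n 4 p (Function.update σ e true) /
        (rcWeight n 4 p (Function.update σ e true) +
          rcWeight n 4 p (Function.update σ e false)) := by
  have hk1 : 0 < kcount n 4 (Function.update σ e true) := kcount_four_pos n _
  have hk01 := kcount_update_false_le_seven_mul σ e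
  simp only [rcWeight, bweight_update, if_true, Bool.false_eq_true, if_false]
  generalize kcount n 4 (Function.update σ e true) = k1 at hk1 hk01 ⊢
  generalize kcount n 4 (Function.update σ e false) = k0 at hk01 ⊢
  set W := ∏ e' ∈ Finset.univ.erase e, (if σ e' then p else 1 - p)
  have hW : 0 < W := Finset.prod_pos fun e' _ => by split_ifs <;> linarith
  have hk01' : W * k0 ≤ 7 * (W * k1) := by
    rw [mul_left_comm]
    exact mul_le_mul_of_nonneg_left (by exact_mod_cast hk01) hW.le
  have hbound := div_add_le_div_add_of_le_mul hp hp1.le (by positivity) (by positivity) hk01'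
  convert hbound using 2 <;> ring
end

section
/- The 5-site pattern consisting of heights 2 at positions (0,0),(1,0),(0,1),(0,2),(1,2) with a 4 at (1,1), embedded in a sea of 2-value pattern's complement filled with 4's, is burnable; replacing the central 4 by 3 and the surrounding sea by 3's yields a non-burnable configuration. -/
open scoped Classical

/-!
In a sea of `4`'s the outer ring of a box burns at once: every ring site has a neighbor outside
the box, hence at most three remaining neighbors, while every interior site keeps all four.
Peeling ring after ring reduces the box `[-n,n]²` to `[-2,2]²`, which contains the island and
burns completely by direct computation. In a sea of `3`'s the island together with its center
is the `2 × 3` rectangle `{0,1} × {0,1,2}`, in which each site has at least as many neighbors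
as its height; such a set is never removed by a burning step, so the box never burns out.
-/

lemma adjacent_iff_mem_nbhd (x y : Site) : adjacent x y ↔ y ∈ nbhd x := by
  obtain ⟨a, b⟩ := x; obtain ⟨c, d⟩ := y
  simp only [adjacent, nbhd, Finset.mem_insert, Finset.mem_singleton, Prod.mk.injEq]
  omega

lemma nbrs_eq_card_inter (A : Finset Site) (x : Site) : nbrs A x = (A ∩ nbhd x).card := by
  rw [nbrs, Finset.filter_mem_eq_inter.symm]
  simp only [adjacent_iff_mem_nbhd]

lemma card_nbhd (x : Site) : (nbhd x).card = 4 := by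
  rw [nbhd, Finset.card_insert_of_notMem, Finset.card_insert_of_notMem,
    Finset.card_insert_of_notMem, Finset.card_singleton] <;> simp [Prod.ext_iff] <;> omega

lemma nbrs_mono {A B : Finset Site} (h : A ⊆ B) (x : Site) : nbrs A x ≤ nbrs B x :=
  Finset.card_le_card (Finset.filter_subset_filter _ h)

lemma nbrs_eq_four_of_nbhd_subset {A : Finset Site} {x : Site} (h : nbhd x ⊆ A) :
    nbrs A x = 4 := by
  rw [nbrs_eq_card_inter, Finset.inter_eq_right.mpr h, card_nbhd]

lemma nbrs_le_three_of_mem_nbhd_of_notMem {A : Finset Site} {x y : Site} (hy : y ∈ nbhd x)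
    (hyA : y ∉ A) : nbrs A x ≤ 3 := by
  rw [nbrs_eq_card_inter]
  calc (A ∩ nbhd x).card ≤ ((nbhd x).erase y).card :=
        Finset.card_le_card fun z hz =>
          Finset.mem_erase.mpr ⟨fun h => hyA (h ▸ (Finset.mem_inter.mp hz).1),
            (Finset.mem_inter.mp hz).2⟩
    _ = 3 := by rw [Finset.card_erase_of_mem hy, card_nbhd]

section Stable

variable {η : Site → ℕ}

lemma burnStep_mono (η : Site → ℕ) : Monotone (burnStep η) := fun _ _ hAB _ hx =>
  Finset.mem_filter.mpr ⟨hAB (Finset.mem_filter.mp hx).1,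
    (Finset.mem_filter.mp hx).2.trans (nbrs_mono hAB _)⟩

lemma subset_burnStep_of_le_nbrs {F : Finset Site} (hF : ∀ x ∈ F, η x ≤ nbrs F x) :
    F ⊆ burnStep η F := fun x hx => Finset.mem_filter.mpr ⟨hx, hF x hx⟩

lemma not_burnable_of_le_nbrs {V F : Finset Site} (hF : ∀ x ∈ F, η x ≤ nbrs F x)
    (hFV : F ⊆ V) (hne : F.Nonempty) : ¬ Burnable V η := by
  rintro ⟨k, hk⟩
  have hFk : F ⊆ (burnStep η)^[k] F :=
    (burnStep_mono η).monotone_iterate_of_le_map (subset_burnStep_of_le_nbrs hF) (Nat.zero_le k)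
  have hFV : F ⊆ (burnStep η)^[k] V := hFk.trans ((burnStep_mono η).iterate k hFV)
  rw [hk, Finset.subset_empty] at hFV
  exact hne.ne_empty hFV

end Stable

section Box

lemma mem_box {m : ℕ} {x : Site} :
    x ∈ box m ↔ -(m : ℤ) ≤ x.1 ∧ x.1 ≤ m ∧ -(m : ℤ) ≤ x.2 ∧ x.2 ≤ m := by
  simp [box, Finset.mem_Icc, and_assoc]

lemma box_mono {m k : ℕ} (h : m ≤ k) : box m ⊆ box k := by
  intro x hx
  rw [mem_box] at hx ⊢
  have : (m : ℤ) ≤ k := by exact_mod_cast h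
  omega

lemma nbhd_subset_box_succ {m : ℕ} {x : Site} (hx : x ∈ box m) : nbhd x ⊆ box (m + 1) := by
  intro z hz
  rw [mem_box] at hx ⊢
  simp only [nbhd, Finset.mem_insert, Finset.mem_singleton] at hz
  push_cast
  rcases hz with rfl | rfl | rfl | rfl <;> dsimp only <;> omega

lemma exists_mem_nbhd_notMem_box_succ {m : ℕ} {x : Site} (hx : x ∈ box (m + 1))
    (hx' : x ∉ box m) : ∃ y ∈ nbhd x, y ∉ box (m + 1) := by
  obtain ⟨a, b⟩ := x
  simp only [mem_box] at hx hx' ⊢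
  push_cast at hx ⊢
  simp only [nbhd, Finset.mem_insert, Finset.mem_singleton, exists_eq_or_imp, exists_eq_left]
  omega

variable {η : Site → ℕ}

lemma burnStep_box_succ {m : ℕ} (hin : ∀ x ∈ box m, η x ≤ 4)
    (hring : ∀ x ∈ box (m + 1), x ∉ box m → 4 ≤ η x) :
    burnStep η (box (m + 1)) = box m := by
  ext x
  rw [burnStep, Finset.mem_filter]
  constructor
  · rintro ⟨hx, hburn⟩
    by_contra hx'
    obtain ⟨y, hy, hyout⟩ := exists_mem_nbhd_notMem_box_succ hx hx'
    have := nbrs_le_three_of_mem_nbhd_of_notMem hy hyout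
    have := hring x hx hx'
    omega
  · intro hx
    refine ⟨box_mono m.le_succ hx, ?_⟩
    rw [nbrs_eq_four_of_nbhd_subset (nbhd_subset_box_succ hx)]
    exact hin x hx

lemma iterate_burnStep_box {m : ℕ} (hle : ∀ x, η x ≤ 4) (hsea : ∀ x ∉ box m, 4 ≤ η x) :
    ∀ j, (burnStep η)^[j] (box (m + j)) = box m
  | 0 => rfl
  | j + 1 => by
    rw [Function.iterate_succ_apply, ← add_assoc,
      burnStep_box_succ (fun x _ => hle x)
        (fun x _ hx => hsea x fun hm => hx (box_mono (Nat.le_add_right m j) hm)),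
      iterate_burnStep_box hle hsea j]

lemma burnable_box_of_burnable_box {m n : ℕ} (hle : ∀ x, η x ≤ 4)
    (hsea : ∀ x ∉ box m, 4 ≤ η x) (hm : Burnable (box m) η) (hmn : m ≤ n) :
    Burnable (box n) η := by
  obtain ⟨k, hk⟩ := hm
  refine ⟨k + (n - m), ?_⟩
  rw [Function.iterate_add_apply, ← Nat.add_sub_cancel' hmn, Nat.add_sub_cancel_left,
    iterate_burnStep_box hle hsea, hk]

end Box

section Island

def islandHeight (sea : ℕ) : Site → ℕ := fun x =>
  if x = (0, 0) ∨ x = (1, 0) ∨ x = (0, 1) ∨ x = (0, 2) ∨ x = (1, 2) then 2 else sea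

lemma islandHeight_le {sea : ℕ} (h : 2 ≤ sea) (x : Site) : islandHeight sea x ≤ sea := by
  unfold islandHeight
  split_ifs <;> omega

lemma islandHeight_of_notMem_box_two {sea : ℕ} {x : Site} (hx : x ∉ box 2) :
    islandHeight sea x = sea := by
  refine if_neg ?_
  rintro (rfl | rfl | rfl | rfl | rfl) <;> exact hx (by decide)

lemma burnable_box_two_islandHeight_four : Burnable (box 2) (islandHeight 4) := ⟨5, by decide⟩

def islandRect : Finset Site := {(0, 0), (1, 0), (0, 1), (1, 1), (0, 2), (1, 2)}

lemma islandHeight_three_le_nbrs_islandRect :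
    ∀ x ∈ islandRect, islandHeight 3 x ≤ nbrs islandRect x := by
  decide

lemma islandRect_subset_box {n : ℕ} (hn : 2 ≤ n) : islandRect ⊆ box n :=
  (by decide : islandRect ⊆ box 2).trans (box_mono hn)

end Island

/-- The 5-site pattern of `2`'s around a central site, with the central site
and the surrounding sea equal to `4`, is burnable; with `4` replaced by `3`
it is not burnable. -/
theorem exceptional_island_2s (n : ℕ) (hn : 4 ≤ n) :
    Burnable (box n)
      (fun x => if x = (0, 0) ∨ x = (1, 0) ∨ x = (0, 1) ∨
          x = (0, 2) ∨ x = (1, 2) then 2 else 4) ∧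
    ¬ Burnable (box n)
      (fun x => if x = (0, 0) ∨ x = (1, 0) ∨ x = (0, 1) ∨
          x = (0, 2) ∨ x = (1, 2) then 2 else 3) :=
  ⟨burnable_box_of_burnable_box (islandHeight_le (by norm_num))
      (fun _ hx => (islandHeight_of_notMem_box_two hx).ge) burnable_box_two_islandHeight_four
      (by omega),
    not_burnable_of_le_nbrs islandHeight_three_le_nbrs_islandRect
      (islandRect_subset_box (by omega)) (by decide)⟩
end
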